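/- There exists a dimension-independent constant c such that for all d ≥ c and all y ∈ Z^d with |y|_1 ≤ d/2, the simple random walk on Z^d satisfies P_y[ |X_n|_1 > |y|_1 for all n > 0 ] ≥ 1 − 4(|y|_1 ∨ 1)/(2d − (|y|_1 ∨ 1)). -/

import Mathlib

open MeasureTheory Filter

abbrev Zd (d : ℕ) := Fin d → ℤ

/-- The unit step in direction `i`, with sign `s` (`true` = `+1`). -/
def dir (d : ℕ) (i : Fin d) (s : Bool) : Zd d :=
  fun j => if j = i then (if s then 1 else -1) else 0

/-- ℓ¹-norm on ℤ^d. -/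
def norm1 {d : ℕ} (x : Zd d) : ℕ := ∑ j, (x j).natAbs

/-- ℓ∞-norm on ℤ^d. -/
def normInf {d : ℕ} (x : Zd d) : ℕ := Finset.univ.sup fun j => (x j).natAbs

/-- Euclidean norm on ℤ^d. -/
noncomputable def euclid {d : ℕ} (x : Zd d) : ℝ := Real.sqrt (∑ j, ((x j : ℝ)) ^ 2)

/-- Nearest-neighbor adjacency on ℤ^d. -/
def adjZ {d : ℕ} (x y : Zd d) : Prop := norm1 (x - y) = 1

-- `avoidProb d K n x` is the probability that simple random walk started at `x`
-- stays outside `K` at all times `1, …, n`.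
open Classical in
noncomputable def avoidProb (d : ℕ) (K : Set (Zd d)) : ℕ → Zd d → ℝ
  | 0, _ => 1
  | n + 1, x => (2 * d : ℝ)⁻¹ * ∑ i : Fin d, ∑ s : Bool,
      (if x + dir d i s ∈ K then 0 else avoidProb d K n (x + dir d i s))

/-- `P_x[X_n ∉ K for all n ≥ 1]`. -/
noncomputable def escapeProb (d : ℕ) (K : Set (Zd d)) (x : Zd d) : ℝ :=
  ⨅ n : ℕ, avoidProb d K n x

/-- Capacity of `K` for simple random walk on ℤ^d. -/
noncomputable def capa (d : ℕ) (K : Set (Zd d)) : ℝ :=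
  ∑' x : K, escapeProb d K (x : Zd d)

/-- Closed Euclidean ball of radius `L` around the origin in ℤ^d. -/
def ballE (d : ℕ) (L : ℝ) : Set (Zd d) := {x | euclid x ≤ L}

/-!
Put `m = |y|₁`, `M = m ∨ 1` and `ρ = 2M / (2d - M)`. From `x` the norm `|X|₁` goes up with
probability `1 - r/(2d)`, `r` the support size of `x`, so `ρ ^ (|x|₁ - m)` is superharmonic as
long as `r` is below about `2M`. When `r` is larger, `|x|₁ - m ≥ r - m` is of order `M` and
`ρ ^ (|x|₁ - m)` is exponentially small; since `|x|₂² ≤ (|x|₁ - r + 1)² + r`, the defect is then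
absorbed by a multiple of `1 / (|x|₂² + 1)`, whose mean over the neighbours is smaller by order
`|x|₂⁻⁴` once `d ≥ 8`. The sum `g` of the two terms is `≥ 1` on the ball `|x|₁ ≤ m` and
superharmonic outside it, so `1 - g` bounds the probability of avoiding the ball. Finally, at
least `2d - M` neighbours of `y` lie on the sphere `|x|₁ = m + 1`, where `g ≤ 3ρ/2`.
-/

open Finset

section Lattice

variable {d : ℕ}

def sqNorm (x : Zd d) : ℤ := ∑ j, x j ^ 2

def supportCard (x : Zd d) : ℕ := #{j | x j ≠ 0}

lemma sum_add_dir_apply {M : Type*} [AddCommGroup M] (φ : ℤ → M) (x : Zd d) (i : Fin d)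
    (s : Bool) :
    ∑ j, φ ((x + dir d i s) j) = ∑ j, φ (x j) - φ (x i) + φ (x i + if s then 1 else -1) := by
  rw [← add_sum_erase _ _ (mem_univ i), ← add_sum_erase _ (fun j => φ (x j)) (mem_univ i)]
  have h : ∀ j ∈ univ.erase i, φ ((x + dir d i s) j) = φ (x j) := fun j hj => by
    simp [dir, ne_of_mem_erase hj]
  rw [sum_congr rfl h]
  simp only [Pi.add_apply, dir, if_true]
  abel

lemma norm1_add_dir (x : Zd d) (i : Fin d) (s : Bool) :
    norm1 (x + dir d i s) + (x i).natAbs = norm1 x + (x i + if s then 1 else -1).natAbs := by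
  have h := sum_add_dir_apply (fun a => |a|) x i s
  simp only [norm1]
  zify
  linarith

lemma sqNorm_add_dir (x : Zd d) (i : Fin d) (s : Bool) :
    sqNorm (x + dir d i s) = sqNorm x + 2 * (if s then 1 else -1) * x i + 1 := by
  rw [sqNorm, sqNorm, sum_add_dir_apply (· ^ 2)]
  cases s <;> simp only [Bool.false_eq_true, if_true, if_false] <;> ring

lemma sum_bool_norm1_add_dir {α : Type*} [AddCommMonoid α] (f : ℕ → α) (x : Zd d) (i : Fin d) :
    ∑ s, f (norm1 (x + dir d i s)) =
      if x i = 0 then 2 • f (norm1 x + 1) else f (norm1 x + 1) + f (norm1 x - 1) := by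
  have ht := norm1_add_dir x i true
  have hf := norm1_add_dir x i false
  simp only [if_true, Bool.false_eq_true, if_false] at ht hf
  rw [Fintype.sum_bool]
  split_ifs with h
  · simp only [h, Int.natAbs_zero, add_zero, zero_add] at ht hf
    rw [show norm1 (x + dir d i true) = norm1 x + 1 by omega,
      show norm1 (x + dir d i false) = norm1 x + 1 by omega, two_nsmul]
  · rcases lt_or_gt_of_ne h with hneg | hpos
    · rw [show norm1 (x + dir d i true) = norm1 x - 1 by omega,
        show norm1 (x + dir d i false) = norm1 x + 1 by omega, add_comm]
    · rw [show norm1 (x + dir d i true) = norm1 x + 1 by omega,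
        show norm1 (x + dir d i false) = norm1 x - 1 by omega]

lemma sum_neighbors_norm1 (f : ℕ → ℝ) (x : Zd d) :
    ∑ i, ∑ s, f (norm1 (x + dir d i s)) =
      (2 * d - supportCard x) * f (norm1 x + 1) + supportCard x * f (norm1 x - 1) := by
  have hcard : (#{i | x i = 0} : ℝ) = d - supportCard x := by
    have := card_filter_add_card_filter_not (s := univ) (fun i => x i = 0)
    rw [card_univ, Fintype.card_fin] at this
    rw [eq_sub_iff_add_eq, supportCard]
    exact_mod_cast this
  simp only [sum_bool_norm1_add_dir, sum_ite, sum_const, nsmul_eq_mul, hcard, supportCard]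
  ring

lemma supportCard_le_norm1 (x : Zd d) : supportCard x ≤ norm1 x :=
  calc supportCard x = ∑ _ ∈ {j | x j ≠ 0}, 1 := card_eq_sum_ones _
    _ ≤ ∑ j ∈ {j | x j ≠ 0}, (x j).natAbs :=
      sum_le_sum fun _ hj => Int.natAbs_pos.mpr (mem_filter.mp hj).2
    _ ≤ norm1 x := sum_le_sum_of_subset (subset_univ _)

lemma sqNorm_nonneg (x : Zd d) : 0 ≤ sqNorm x :=
  sum_nonneg fun j _ => sq_nonneg (x j)

lemma sq_le_sqNorm (x : Zd d) (i : Fin d) : x i ^ 2 ≤ sqNorm x :=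
  single_le_sum (fun j _ => sq_nonneg (x j)) (mem_univ i)

lemma norm1_le_sqNorm (x : Zd d) : (norm1 x : ℤ) ≤ sqNorm x := by
  rw [norm1, sqNorm, Nat.cast_sum]
  exact sum_le_sum fun j _ => Int.natAbs_le_self_sq (x j)

/-- Among vectors with given `ℓ¹`-norm and support size, `sqNorm` is largest when all but one
nonzero entry are `±1`. -/
lemma sqNorm_le (x : Zd d) :
    sqNorm x ≤ ((norm1 x : ℤ) - supportCard x + 1) ^ 2 + supportCard x - 1 := by
  set T : Finset (Fin d) := {j | x j ≠ 0}
  have hout : ∀ j ∈ univ, j ∉ T → x j = 0 := by simp [T]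
  have hpos : ∀ j ∈ T, 0 ≤ |x j| - 1 := fun j hj => by
    have := abs_pos.mpr (mem_filter.mp hj).2; omega
  have hU : sqNorm x = ∑ j ∈ T, ((|x j| - 1) ^ 2 + 2 * (|x j| - 1) + 1) := by
    rw [sqNorm, ← sum_subset (subset_univ T) fun j hj hjT => by simp [hout j hj hjT]]
    exact sum_congr rfl fun j _ => by rw [← sq_abs]; ring
  have hn : (norm1 x : ℤ) - supportCard x = ∑ j ∈ T, (|x j| - 1) := by
    rw [sum_sub_distrib, sum_subset (subset_univ T) fun j hj hjT => by simp [hout j hj hjT]]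
    simp [norm1, supportCard, T]
  have hr : ∑ j ∈ T, (1 : ℤ) = supportCard x := by simp [T, supportCard]
  have hsq := sum_sq_le_sq_sum_of_nonneg hpos
  rw [hU, sum_add_distrib, sum_add_distrib, ← mul_sum, ← hn, hr]
  rw [← hn] at hsq
  linarith

end Lattice

lemma one_div_add_one_div_le {U c : ℝ} (hU : 0 ≤ U) (hc : c ^ 2 ≤ U) :
    1 / (U + 2 + 2 * c) + 1 / (U + 2 - 2 * c)
      ≤ 2 / (U + 2) + 8 * c ^ 2 / ((U + 1) * (U ^ 2 + 4)) := by
  have hprod : U ^ 2 + 4 ≤ (U + 2 + 2 * c) * (U + 2 - 2 * c) := by nlinarith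
  have h1 : 0 < U + 2 + 2 * c := by nlinarith [sq_nonneg (c + 1)]
  have h2 : 0 < U + 2 - 2 * c := by nlinarith [sq_nonneg (c - 1)]
  have key : 1 / (U + 2 + 2 * c) + 1 / (U + 2 - 2 * c)
      = 2 / (U + 2) + 8 * c ^ 2 / ((U + 2) * ((U + 2 + 2 * c) * (U + 2 - 2 * c))) := by
    field_simp
    ring
  rw [key]
  gcongr
  nlinarith

lemma two_mul_div_add_le {U d : ℝ} (hU : 0 ≤ U) (hd : 8 ≤ d) :
    2 * d / (U + 2) + 8 * U / ((U + 1) * (U ^ 2 + 4)) ≤ 2 * d / (U + 1) - d / (U + 3) ^ 2 := by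
  rw [← sub_nonneg]
  have key : 2 * d / (U + 1) - d / (U + 3) ^ 2 - (2 * d / (U + 2) + 8 * U / ((U + 1) * (U ^ 2 + 4)))
      = (d * (U ^ 2 + 4) * (U ^ 2 + 9 * U + 16) - 8 * U * (U + 2) * (U + 3) ^ 2)
        / ((U + 1) * (U + 2) * (U + 3) ^ 2 * (U ^ 2 + 4)) := by
    field_simp
    ring
  rw [key]
  have hQ : 0 ≤ (U ^ 2 + 4) * (U ^ 2 + 9 * U + 16) := by positivity
  have : 8 * ((U ^ 2 + 4) * (U ^ 2 + 9 * U + 16)) ≤ d * ((U ^ 2 + 4) * (U ^ 2 + 9 * U + 16)) := by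
    nlinarith
  apply div_nonneg _ (by positivity)
  nlinarith [mul_nonneg hU (sq_nonneg (U - 1))]

lemma pow_five_le_two_pow (j : ℕ) : j ^ 5 ≤ 200 * 2 ^ j := by
  rcases lt_or_ge j 8 with h | h
  · interval_cases j <;> norm_num
  · induction j, h using Nat.le_induction with
    | base => norm_num
    | succ k hk ih =>
      have h8 : 8 * k ^ 4 ≤ k * k ^ 4 := Nat.mul_le_mul_right _ hk
      calc (k + 1) ^ 5 ≤ 2 * k ^ 5 := by nlinarith [pow_le_pow_left₀ (Nat.zero_le 8) hk 4]
        _ ≤ 2 * (200 * 2 ^ k) := by omega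
        _ = 200 * 2 ^ (k + 1) := by ring

lemma pow_five_mul_half_pow_le (j : ℕ) : (j : ℝ) ^ 5 * (1 / 2) ^ j ≤ 200 := by
  rw [one_div, inv_pow, ← div_eq_mul_inv, div_le_iff₀ (by positivity)]
  exact_mod_cast pow_five_le_two_pow j

noncomputable def decayRate (d M : ℝ) : ℝ := 2 * M / (2 * d - M)

/-- The mean of `decayRate d M ^ |·|₁` over the neighbours of `x` exceeds its value at `x` exactly
when the support of `x` is larger than this. -/
noncomputable def criticalSupport (d M : ℝ) : ℝ := 4 * d * M / (2 * d + M)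

section DecayRate

variable {d M : ℝ}

lemma decayRate_pos (hM : 0 < M) (hMd : M < 2 * d) : 0 < decayRate d M :=
  div_pos (by linarith) (by linarith)

lemma decayRate_le_half (hM : 0 < M) (hMd : 5 * M ≤ 2 * d) : decayRate d M ≤ 1 / 2 := by
  rw [decayRate, div_le_iff₀ (by linarith)]
  linarith

lemma one_sub_two_mul_decayRate_le (hM : 0 < M) (hMd : M < 2 * d) :
    1 - 2 * decayRate d M ≤ (2 * d)⁻¹ * ((2 * d - M) * (1 - 3 / 2 * decayRate d M)) := by
  have h1 : 2 * d - M ≠ 0 := by linarith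
  have h2 : d ≠ 0 := by linarith
  have key : (2 * d)⁻¹ * ((2 * d - M) * (1 - 3 / 2 * decayRate d M)) - (1 - 2 * decayRate d M)
      = (2 * M) ^ 2 / ((2 * d) * (2 * d - M)) := by
    rw [decayRate]
    field_simp
    ring
  have : 0 ≤ (2 * M) ^ 2 / ((2 * d) * (2 * d - M)) := div_nonneg (sq_nonneg _) (by nlinarith)
  linarith

lemma five_div_three_mul_le_criticalSupport (hM : 0 < M) (hMd : 5 * M ≤ 2 * d) :
    5 / 3 * M ≤ criticalSupport d M := by
  rw [criticalSupport, le_div_iff₀ (by linarith)]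
  nlinarith

lemma mean_pow_decayRate_sub_eq (hM : 0 < M) (hMd : M < 2 * d) (r : ℝ) {j : ℕ} (hj : 1 ≤ j) :
    (2 * d)⁻¹ * ((2 * d - r) * decayRate d M ^ (j + 1) + r * decayRate d M ^ (j - 1))
        - decayRate d M ^ j
      = decayRate d M ^ (j - 1) * (1 - decayRate d M ^ 2) * (r - criticalSupport d M)
        / (2 * d) := by
  obtain ⟨k, rfl⟩ : ∃ k, j = k + 1 := ⟨j - 1, by omega⟩
  have h1 : 2 * d - M ≠ 0 := by linarith
  have h2 : 2 * d + M ≠ 0 := by linarith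
  have h3 : d ≠ 0 := by linarith
  simp only [decayRate, criticalSupport, Nat.add_sub_cancel, pow_succ]
  field_simp
  ring

lemma pow_decayRate_mul_sub_criticalSupport_le {m j r : ℕ} (hmM : m ≤ M) (hM : 1 ≤ M)
    (hMd : 5 * M < 2 * d) (hr : r ≤ m + j) (hB : criticalSupport d M < r) :
    decayRate d M ^ (j - 1) * (r - criticalSupport d M)
      ≤ 10 * decayRate d M * j * (1 / 2) ^ j := by
  set ρ := decayRate d M with hρ
  have hρ0 : 0 < ρ := decayRate_pos (by linarith) (by linarith)
  have hρ1 : ρ ≤ 1 / 2 := decayRate_le_half (by linarith) hMd.le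
  have hB5 := five_div_three_mul_le_criticalSupport (by linarith) hMd.le
  have hrR : (r : ℝ) ≤ m + j := by exact_mod_cast hr
  have hMj : M < 3 / 2 * j := by linarith
  -- For `r ≤ 2M` the gap `r - criticalSupport d M` is at most `ρ M`; for `r > 2M` it is only
  -- bounded by `r`, but then `j ≥ 2` and `ρ ^ (j - 1)` supplies the factor `ρ`.
  rcases le_or_gt (r : ℝ) (2 * M) with hr2 | hr2
  · have hsub : r - criticalSupport d M ≤ ρ * M := by
      have hB_eq : criticalSupport d M = 2 * M - 2 * M ^ 2 / (2 * d + M) := by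
        rw [criticalSupport, eq_sub_iff_add_eq, ← add_div, div_eq_iff (by linarith)]
        ring
      have : 2 * M ^ 2 / (2 * d + M) ≤ ρ * M := by
        rw [hρ, decayRate, div_mul_eq_mul_div, mul_assoc, ← sq]
        gcongr <;> linarith
      linarith
    have hpow : ρ ^ (j - 1) ≤ 2 * (1 / 2) ^ j := by
      calc ρ ^ (j - 1) ≤ (1 / 2) ^ (j - 1) := pow_le_pow_left₀ hρ0.le hρ1 _
        _ ≤ 2 * (1 / 2) ^ j := by
          rcases j with _ | k
          · norm_num
          · rw [Nat.add_sub_cancel, pow_succ]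
            linarith [pow_pos (by norm_num : (0 : ℝ) < 1 / 2) k]
    calc ρ ^ (j - 1) * (r - criticalSupport d M) ≤ 2 * (1 / 2) ^ j * (ρ * M) := by gcongr
      _ ≤ 10 * ρ * j * (1 / 2) ^ j := by
          have := mul_pos hρ0 (pow_pos (by norm_num : (0 : ℝ) < 1 / 2) j)
          nlinarith
  · obtain ⟨k, rfl⟩ : ∃ k, j = k + 2 := ⟨j - 2, by
      have : (1 : ℝ) < j := by linarith
      have : 1 < j := by exact_mod_cast this
      omega⟩
    have hpow : ρ ^ (k + 2 - 1) ≤ 4 * ρ * (1 / 2) ^ (k + 2) :=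
      calc ρ ^ (k + 2 - 1) = ρ * ρ ^ k := by rw [show k + 2 - 1 = k + 1 by omega, pow_succ']
        _ ≤ ρ * (1 / 2) ^ k := by gcongr
        _ = 4 * ρ * (1 / 2) ^ (k + 2) := by ring
    calc ρ ^ (k + 2 - 1) * (r - criticalSupport d M)
        ≤ 4 * ρ * (1 / 2) ^ (k + 2) * (5 / 2 * ↑(k + 2)) := by
          gcongr
          linarith
      _ = 10 * ρ * ↑(k + 2) * (1 / 2) ^ (k + 2) := by ring

lemma mean_pow_decayRate_sub_le {m j r : ℕ} (hd : 72000 ≤ d) (hmM : m ≤ M) (hM : 1 ≤ M)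
    (hMd : 5 * M < 2 * d) (hj : 1 ≤ j) (hr : r ≤ m + j) :
    (2 * d)⁻¹ * ((2 * d - r) * decayRate d M ^ (j + 1) + r * decayRate d M ^ (j - 1))
        - decayRate d M ^ j
      ≤ decayRate d M / (2 * (((m : ℝ) + j - r + 1) ^ 2 + r + 2) ^ 2) := by
  have hρ0 : 0 < decayRate d M := decayRate_pos (by linarith) (by linarith)
  have hρ1 : decayRate d M ≤ 1 / 2 := decayRate_le_half (by linarith) hMd.le
  rw [mean_pow_decayRate_sub_eq (by linarith) (by linarith) r hj]
  set ρ := decayRate d M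
  set B := criticalSupport d M
  have hV0 : 0 ≤ ρ / (2 * (((m : ℝ) + j - r + 1) ^ 2 + r + 2) ^ 2) := by positivity
  rcases le_or_gt (r : ℝ) B with hrB | hrB
  · refine le_trans (div_nonpos_of_nonpos_of_nonneg ?_ (by linarith)) hV0
    exact mul_nonpos_of_nonneg_of_nonpos
      (mul_nonneg (pow_pos hρ0 _).le (by nlinarith)) (by linarith)
  have hB5 := five_div_three_mul_le_criticalSupport (d := d) (by linarith) hMd.le
  have hrR : (r : ℝ) ≤ m + j := by exact_mod_cast hr
  have hmr : (m : ℝ) + 1 ≤ r := by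
    have : (m : ℝ) < r := by linarith
    exact_mod_cast (show m + 1 ≤ r by exact_mod_cast this)
  have hV : ((m : ℝ) + j - r + 1) ^ 2 + r + 2 ≤ 6 * j ^ 2 := by
    have : ((m : ℝ) + j - r + 1) ^ 2 ≤ j ^ 2 := pow_le_pow_left₀ (by linarith) (by linarith) 2
    nlinarith
  calc ρ ^ (j - 1) * (1 - ρ ^ 2) * (r - B) / (2 * d)
      ≤ ρ ^ (j - 1) * (r - B) / (2 * d) := by
        refine div_le_div_of_nonneg_right ?_ (by linarith)
        have := mul_pos (pow_pos hρ0 (j - 1)) (sub_pos.2 hrB)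
        nlinarith
    _ ≤ 10 * ρ * j * (1 / 2) ^ j / (2 * d) :=
        div_le_div_of_nonneg_right (pow_decayRate_mul_sub_criticalSupport_le hmM hM hMd hr hrB)
          (by linarith)
    _ ≤ ρ / (2 * (6 * j ^ 2) ^ 2) := by
        rw [div_le_div_iff₀ (by linarith) (by positivity)]
        nlinarith [mul_le_mul_of_nonneg_left (pow_five_mul_half_pow_le j) hρ0.le]
    _ ≤ ρ / (2 * (((m : ℝ) + j - r + 1) ^ 2 + r + 2) ^ 2) := by gcongr

end DecayRate

section Walk

variable {d : ℕ}

lemma avoidProb_nonneg (K : Set (Zd d)) (n : ℕ) (x : Zd d) : 0 ≤ avoidProb d K n x := by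
  induction n generalizing x with
  | zero => simp [avoidProb]
  | succ n ih =>
    rw [avoidProb]
    refine mul_nonneg (by positivity) (sum_nonneg fun i _ => sum_nonneg fun s _ => ?_)
    split_ifs
    exacts [le_rfl, ih _]

lemma one_sub_le_avoidProb {K : Set (Zd d)} {h : Zd d → ℝ} (hd : 0 < d)
    (h_nonneg : ∀ x, 0 ≤ h x) (h_one : ∀ x ∈ K, 1 ≤ h x)
    (h_super : ∀ x ∉ K, (2 * d : ℝ)⁻¹ * ∑ i, ∑ s, h (x + dir d i s) ≤ h x)
    (n : ℕ) (x : Zd d) : 1 - h x ≤ avoidProb d K n x := by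
  induction n generalizing x with
  | zero => simp [avoidProb, h_nonneg x]
  | succ n ih =>
    by_cases hx : x ∈ K
    · linarith [h_one x hx, avoidProb_nonneg K (n + 1) x]
    have hd' : (2 * d : ℝ) ≠ 0 := by positivity
    calc 1 - h x ≤ 1 - (2 * d : ℝ)⁻¹ * ∑ i, ∑ s, h (x + dir d i s) := by linarith [h_super x hx]
      _ = (2 * d : ℝ)⁻¹ * ∑ i, ∑ s, (1 - h (x + dir d i s)) := by
        simp only [sum_sub_distrib, sum_const, card_univ, Fintype.card_fin, Fintype.card_bool,
          nsmul_eq_mul, mul_sub]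
        field_simp
        ring
      _ ≤ avoidProb d K (n + 1) x := by
        rw [avoidProb]
        gcongr with i _ s _
        split_ifs with hK
        · linarith [h_one _ hK]
        · exact ih _

lemma mean_inv_sqNorm_add_one_le (hd : 8 ≤ d) (x : Zd d) :
    (2 * d : ℝ)⁻¹ * ∑ i, ∑ s, 1 / ((sqNorm (x + dir d i s) : ℝ) + 1)
      ≤ 1 / ((sqNorm x : ℝ) + 1) - 1 / (2 * ((sqNorm x : ℝ) + 3) ^ 2) := by
  have hU : (0 : ℝ) ≤ sqNorm x := by exact_mod_cast sqNorm_nonneg x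
  have hsq : ∀ i, (x i : ℝ) ^ 2 ≤ sqNorm x := fun i => by exact_mod_cast sq_le_sqNorm x i
  have hsum : ∑ i, (x i : ℝ) ^ 2 = sqNorm x := by simp [sqNorm]
  have hdR : (8 : ℝ) ≤ d := by exact_mod_cast hd
  set U : ℝ := ((sqNorm x : ℤ) : ℝ)
  calc (2 * d : ℝ)⁻¹ * ∑ i, ∑ s, 1 / ((sqNorm (x + dir d i s) : ℝ) + 1)
      = (2 * d : ℝ)⁻¹ * ∑ i, (1 / (U + 2 + 2 * x i) + 1 / (U + 2 - 2 * x i)) := by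
        congr 1
        refine sum_congr rfl fun i _ => ?_
        simp only [Fintype.sum_bool, sqNorm_add_dir, if_true, Bool.false_eq_true, if_false, U]
        push_cast
        ring_nf
    _ ≤ (2 * d : ℝ)⁻¹ * ∑ i, (2 / (U + 2) + 8 * (x i : ℝ) ^ 2 / ((U + 1) * (U ^ 2 + 4))) :=
        mul_le_mul_of_nonneg_left (sum_le_sum fun i _ => one_div_add_one_div_le hU (hsq i))
          (by positivity)
    _ = (2 * d : ℝ)⁻¹ * (2 * d / (U + 2) + 8 * U / ((U + 1) * (U ^ 2 + 4))) := by
        rw [sum_add_distrib, ← hsum, mul_sum, sum_div]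
        simp only [sum_const, card_univ, Fintype.card_fin, nsmul_eq_mul]
        ring
    _ ≤ (2 * d : ℝ)⁻¹ * (2 * d / (U + 1) - d / (U + 3) ^ 2) := by
        gcongr
        exact two_mul_div_add_le hU hdR
    _ = 1 / (U + 1) - 1 / (2 * (U + 3) ^ 2) := by
        field_simp

-- `norm1 x - m` truncates, so the first term is `1` on the ball `|x|₁ ≤ m`.
noncomputable def escapeBarrier (ρ : ℝ) (m : ℕ) (x : Zd d) : ℝ :=
  ρ ^ (norm1 x - m) + ρ * (m + 2) / 2 / ((sqNorm x : ℝ) + 1)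

variable {ρ : ℝ} {m : ℕ}

lemma escapeBarrier_nonneg (hρ : 0 ≤ ρ) (x : Zd d) : 0 ≤ escapeBarrier ρ m x := by
  have : (0 : ℝ) ≤ sqNorm x := by exact_mod_cast sqNorm_nonneg x
  unfold escapeBarrier
  positivity

lemma one_le_escapeBarrier (hρ : 0 ≤ ρ) {x : Zd d} (hx : norm1 x ≤ m) :
    1 ≤ escapeBarrier ρ m x := by
  have : (0 : ℝ) ≤ sqNorm x := by exact_mod_cast sqNorm_nonneg x
  rw [escapeBarrier, Nat.sub_eq_zero_of_le hx, pow_zero, le_add_iff_nonneg_right]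
  positivity

lemma escapeBarrier_le_of_norm1_eq (hρ : 0 ≤ ρ) {x : Zd d} (hx : norm1 x = m + 1) :
    escapeBarrier ρ m x ≤ 3 / 2 * ρ := by
  have hU : (m : ℝ) + 1 ≤ sqNorm x := by exact_mod_cast hx ▸ norm1_le_sqNorm x
  have : ρ * (m + 2) / 2 / ((sqNorm x : ℝ) + 1) ≤ ρ / 2 := by
    rw [div_le_iff₀ (by linarith)]
    nlinarith
  rw [escapeBarrier, hx, Nat.add_sub_cancel_left, pow_one]
  linarith

lemma mean_pow_norm1_sub_le {M : ℝ} (hd : 72000 ≤ d) (hmM : m ≤ M) (hM : 1 ≤ M)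
    (hMd : 5 * M < 2 * d) {x : Zd d} (hx : m < norm1 x) :
    (2 * d : ℝ)⁻¹ * ∑ i, ∑ s, decayRate d M ^ (norm1 (x + dir d i s) - m)
      ≤ decayRate d M ^ (norm1 x - m) + decayRate d M / (2 * ((sqNorm x : ℝ) + 3) ^ 2) := by
  obtain ⟨j, hj, hxj⟩ : ∃ j, 1 ≤ j ∧ norm1 x = m + j := ⟨norm1 x - m, by omega, by omega⟩
  have hr : supportCard x ≤ m + j := hxj ▸ supportCard_le_norm1 x
  have hU0 : (0 : ℝ) ≤ sqNorm x := by exact_mod_cast sqNorm_nonneg x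
  have hUV : (sqNorm x : ℝ) + 3 ≤ ((m : ℝ) + j - supportCard x + 1) ^ 2 + supportCard x + 2 := by
    have := sqNorm_le x
    rw [hxj] at this
    have : (sqNorm x : ℝ) ≤ ((m : ℝ) + j - supportCard x + 1) ^ 2 + supportCard x - 1 := by
      exact_mod_cast this
    linarith
  have hρ : 0 < decayRate d M := decayRate_pos (by linarith) (by linarith)
  have hexcess := mean_pow_decayRate_sub_le (by exact_mod_cast hd) hmM hM hMd hj hr
  rw [sum_neighbors_norm1 (fun k => decayRate d M ^ (k - m)), hxj,
    show m + j + 1 - m = j + 1 by omega, show m + j - 1 - m = j - 1 by omega,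
    Nat.add_sub_cancel_left]
  have : decayRate d M / (2 * (((m : ℝ) + j - supportCard x + 1) ^ 2 + supportCard x + 2) ^ 2)
      ≤ decayRate d M / (2 * ((sqNorm x : ℝ) + 3) ^ 2) := by
    gcongr decayRate d M / (2 * ?_ ^ 2)
  linarith

lemma escapeBarrier_superharmonic {M : ℝ} (hd : 72000 ≤ d) (hmM : m ≤ M) (hM : 1 ≤ M)
    (hMd : 5 * M < 2 * d) {x : Zd d} (hx : m < norm1 x) :
    (2 * d : ℝ)⁻¹ * ∑ i, ∑ s, escapeBarrier (decayRate d M) m (x + dir d i s)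
      ≤ escapeBarrier (decayRate d M) m x := by
  set ρ := decayRate d M
  have hρ : 0 < ρ := decayRate_pos (by linarith) (by linarith)
  have hK : ρ ≤ ρ * (m + 2) / 2 := by nlinarith [m.cast_nonneg (α := ℝ)]
  have hsplit : ∑ i, ∑ s, escapeBarrier ρ m (x + dir d i s)
      = ∑ i, ∑ s, ρ ^ (norm1 (x + dir d i s) - m)
        + ρ * (m + 2) / 2 * ∑ i, ∑ s, 1 / ((sqNorm (x + dir d i s) : ℝ) + 1) := by
    simp only [escapeBarrier, sum_add_distrib, mul_sum, mul_one_div]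
  calc (2 * d : ℝ)⁻¹ * ∑ i, ∑ s, escapeBarrier ρ m (x + dir d i s)
      = (2 * d : ℝ)⁻¹ * ∑ i, ∑ s, ρ ^ (norm1 (x + dir d i s) - m) + ρ * (m + 2) / 2 *
          ((2 * d : ℝ)⁻¹ * ∑ i, ∑ s, 1 / ((sqNorm (x + dir d i s) : ℝ) + 1)) := by
        rw [hsplit]
        ring
    _ ≤ ρ ^ (norm1 x - m) + ρ / (2 * ((sqNorm x : ℝ) + 3) ^ 2) + ρ * (m + 2) / 2 *
          (1 / ((sqNorm x : ℝ) + 1) - 1 / (2 * ((sqNorm x : ℝ) + 3) ^ 2)) := by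
        gcongr
        · exact mean_pow_norm1_sub_le hd hmM hM hMd hx
        · exact mean_inv_sqNorm_add_one_le (by omega) x
    _ ≤ escapeBarrier ρ m x := by
        have : ρ / (2 * ((sqNorm x : ℝ) + 3) ^ 2)
            ≤ ρ * (m + 2) / 2 / (2 * ((sqNorm x : ℝ) + 3) ^ 2) := by
          gcongr
        rw [escapeBarrier, mul_sub, mul_one_div, mul_one_div]
        linarith

lemma le_avoidProb_succ_of_norm1_eq {M : ℝ} (hd : 72000 ≤ d) (hmM : m ≤ M) (hM : 1 ≤ M)
    (hMd : 5 * M < 2 * d) {y : Zd d} (hy : norm1 y = m) (n : ℕ) :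
    (2 * d : ℝ)⁻¹ * ((2 * d - M) * (1 - 3 / 2 * decayRate d M))
      ≤ avoidProb d {z | norm1 z ≤ m} (n + 1) y := by
  set ρ := decayRate d M
  have hρ : 0 < ρ := decayRate_pos (by linarith) (by linarith)
  have hρ1 : ρ ≤ 1 / 2 := decayRate_le_half (by linarith) hMd.le
  have hsphere : ∀ v : Zd d, norm1 v = m + 1 →
      1 - 3 / 2 * ρ ≤ avoidProb d {z | norm1 z ≤ m} n v := fun v hv =>
    (sub_le_sub_left (escapeBarrier_le_of_norm1_eq hρ.le hv) 1).trans <|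
      one_sub_le_avoidProb (by omega) (escapeBarrier_nonneg hρ.le)
        (fun _ hx => one_le_escapeBarrier hρ.le hx)
        (fun _ hx => escapeBarrier_superharmonic hd hmM hM hMd (not_le.mp hx)) n v
  have hr : (supportCard y : ℝ) ≤ M :=
    le_trans (by exact_mod_cast hy ▸ supportCard_le_norm1 y) hmM
  calc (2 * d : ℝ)⁻¹ * ((2 * d - M) * (1 - 3 / 2 * ρ))
      ≤ (2 * d : ℝ)⁻¹ * ((2 * d - supportCard y) * (1 - 3 / 2 * ρ)) := by
        gcongr
        linarith
    _ = (2 * d : ℝ)⁻¹ * ∑ i, ∑ s,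
          (fun k => if k = m + 1 then 1 - 3 / 2 * ρ else 0) (norm1 (y + dir d i s)) := by
        rw [sum_neighbors_norm1 (fun k => if k = m + 1 then 1 - 3 / 2 * ρ else 0) y, hy]
        simp
    _ ≤ avoidProb d {z | norm1 z ≤ m} (n + 1) y := by
        rw [avoidProb]
        gcongr with i _ s _
        dsimp only
        by_cases h1 : norm1 (y + dir d i s) = m + 1
        · have h2 : y + dir d i s ∉ {z | norm1 z ≤ m} := by simp [h1]
          rw [if_pos h1, if_neg h2]
          exact hsphere _ h1
        · rw [if_neg h1]
          split_ifs
          exacts [le_rfl, avoidProb_nonneg _ n _]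

lemma one_sub_two_mul_decayRate_le_avoidProb {M : ℝ} (hd : 72000 ≤ d) (hmM : m ≤ M)
    (hM : 1 ≤ M) (hMd : 5 * M < 2 * d) {y : Zd d} (hy : norm1 y = m) (n : ℕ) :
    1 - 2 * decayRate d M ≤ avoidProb d {z | norm1 z ≤ m} n y := by
  cases n with
  | zero =>
    simp only [avoidProb, sub_le_self_iff]
    exact (mul_pos two_pos (decayRate_pos (by linarith) (by linarith))).le
  | succ n =>
    exact (one_sub_two_mul_decayRate_le (by linarith) (by linarith)).trans
      (le_avoidProb_succ_of_norm1_eq hd hmM hM hMd hy n)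

end Walk

/-- Lemma 3.3: there is a dimension-independent constant `c` such that for `d ≥ c` and
`y ∈ ℤ^d` with `|y|₁ ≤ d/2`, the walk started at `y` never returns to the closed
ℓ¹-ball of radius `|y|₁` with probability at least `1 − 4(|y|₁ ∨ 1)/(2d − (|y|₁ ∨ 1))`. -/
theorem escape_l1_ball_lower_bound :
    ∃ c : ℝ, 0 < c ∧ ∀ d : ℕ, c ≤ (d : ℝ) → ∀ y : Zd d, (norm1 y : ℝ) ≤ d / 2 →
      1 - 4 * (max (norm1 y) 1 : ℕ) / (2 * d - (max (norm1 y) 1 : ℕ) : ℝ) ≤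
        escapeProb d {z | norm1 z ≤ norm1 y} y := by
  refine ⟨72000, by norm_num, fun d hd y hy => ?_⟩
  set M : ℝ := ((max (norm1 y) 1 : ℕ) : ℝ)
  have hmM : (norm1 y : ℝ) ≤ M := Nat.cast_le.mpr (le_max_left _ _)
  have hM : 1 ≤ M := Nat.one_le_cast.mpr (le_max_right _ _)
  have hMd : M ≤ d / 2 := by
    rcases le_total (norm1 y) 1 with h | h
    · simp only [M, max_eq_right h]; push_cast; linarith
    · simp only [M, max_eq_left h]; exact hy
  rw [show 4 * M / (2 * d - M) = 2 * decayRate d M by rw [decayRate]; ring]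
  rcases lt_or_ge (5 * M) (2 * d) with h5 | h5
  · exact le_ciInf fun n =>
      one_sub_two_mul_decayRate_le_avoidProb (by exact_mod_cast hd) hmM hM h5 rfl n
  · have : 1 ≤ 2 * decayRate d M := by
      rw [decayRate, ← mul_div_assoc, le_div_iff₀ (by linarith)]
      linarith
    have : 0 ≤ escapeProb d {z | norm1 z ≤ norm1 y} y := le_ciInf fun n => avoidProb_nonneg _ n y
    linarith
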